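/- Let R → S be a homomorphism of commutative rings and I ⊆ S an ideal. Then the natural map of inverse limits lim_m (Ω_{S/R}/I^m•Ω_{S/R}) → lim_m Ω_{(S/I^m)/R} is an isomorphism of S-modules, where each inverse limit is realized as the submodule of the product over m ∈ ℕ consisting of sequences compatible with the transition maps, the transition maps on the left are the natural surjections Ω_{S/R}/I^{m+1}Ω → Ω_{S/R}/I^mΩ, the transition maps on the right are induced by the surjections S/I^{m+1} → S/I^m, and the map between the limits is induced levelwise by the natural maps Ω_{S/R}/I^m•Ω_{S/R} → Ω_{(S/I^m)/R}. -/

import Mathlib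

/-!
The conormal sequence shows that the kernel of `Ω[S⁄R] → Ω[(S/J)⁄R]` is generated by `J • Ω[S⁄R]`
and `d J`. For `J = I ^ (m + 1)` the Leibniz rule puts `d J` inside `I ^ m • Ω[S⁄R]`, so every
element killed at level `m + 1` already vanishes in `Ω[S⁄R]/I^m•Ω[S⁄R]`. The levelwise maps are
surjective, and a map of towers that is levelwise surjective with kernels dying one level down
induces a bijection of inverse limits.
-/

variable {R S : Type*} [CommRing R] [CommRing S] [Algebra R S] (I : Ideal S)

/-- `I^m • Ω[S⁄R]` is killed by the natural map to `Ω[(S/I^m)⁄R]`. -/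
theorem pow_smul_le_ker_kaehlerMap (m : ℕ) :
    (I ^ m • ⊤ : Submodule S (Ω[S⁄R])) ≤
      LinearMap.ker (KaehlerDifferential.map R R S (S ⧸ I ^ m)) := by
  refine Submodule.smul_le.2 fun r hr x _ => ?_
  have h0 : algebraMap S (S ⧸ I ^ m) r = 0 := by
    rw [Ideal.Quotient.algebraMap_eq]
    exact Ideal.Quotient.eq_zero_iff_mem.2 hr
  rw [LinearMap.mem_ker, map_smul,
    ← algebraMap_smul (S ⧸ I ^ m) r (KaehlerDifferential.map R R S (S ⧸ I ^ m) x), h0,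
    zero_smul]

/-- The `S`-linear transition map `Ω[(S/I^{m+1})⁄R] → Ω[(S/I^m)⁄R]` induced by the
surjection `S/I^{m+1} → S/I^m`. -/
noncomputable def kaehlerQuotTrans (m : ℕ) :
    Ω[(S ⧸ I ^ (m + 1))⁄R] →ₗ[S] Ω[(S ⧸ I ^ m)⁄R] :=
  letI : Algebra (S ⧸ I ^ (m + 1)) (S ⧸ I ^ m) :=
    (Ideal.Quotient.factor (Ideal.pow_le_pow_right (Nat.le_succ m))).toAlgebra
  haveI hST : IsScalarTower S (S ⧸ I ^ (m + 1)) (S ⧸ I ^ m) :=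
    IsScalarTower.of_algebraMap_eq fun s => by
      simp [RingHom.algebraMap_toAlgebra, Ideal.Quotient.algebraMap_eq]
  haveI hRT : IsScalarTower R (S ⧸ I ^ (m + 1)) (S ⧸ I ^ m) :=
    IsScalarTower.of_algebraMap_eq fun r => by
      rw [IsScalarTower.algebraMap_apply R S (S ⧸ I ^ m),
        IsScalarTower.algebraMap_apply S (S ⧸ I ^ (m + 1)) (S ⧸ I ^ m),
        ← IsScalarTower.algebraMap_apply R S (S ⧸ I ^ (m + 1))]
  haveI hcomm : SMulCommClass R (S ⧸ I ^ (m + 1)) (S ⧸ I ^ m) :=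
    ⟨fun r a b => by
      rw [Algebra.smul_def, Algebra.smul_def, Algebra.smul_def, Algebra.smul_def]
      ring⟩
  (KaehlerDifferential.map R R (S ⧸ I ^ (m + 1)) (S ⧸ I ^ m)).restrictScalars S

/-- The natural map `Ω[S⁄R]/I^m•Ω[S⁄R] → Ω[(S/I^m)⁄R]`. -/
noncomputable def kaehlerToQuot (m : ℕ) :
    (Ω[S⁄R] ⧸ (I ^ m • ⊤ : Submodule S (Ω[S⁄R]))) →ₗ[S] Ω[(S ⧸ I ^ m)⁄R] :=
  Submodule.liftQ _ (KaehlerDifferential.map R R S (S ⧸ I ^ m))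
    (pow_smul_le_ker_kaehlerMap I m)

theorem kaehlerQuotTrans_comp_map (m : ℕ) :
    (kaehlerQuotTrans (R := R) I m).comp (KaehlerDifferential.map R R S (S ⧸ I ^ (m + 1)))
      = KaehlerDifferential.map R R S (S ⧸ I ^ m) := by
  letI : Algebra (S ⧸ I ^ (m + 1)) (S ⧸ I ^ m) :=
    (Ideal.Quotient.factor (Ideal.pow_le_pow_right (Nat.le_succ m))).toAlgebra
  haveI hST : IsScalarTower S (S ⧸ I ^ (m + 1)) (S ⧸ I ^ m) :=
    IsScalarTower.of_algebraMap_eq fun s => by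
      simp [RingHom.algebraMap_toAlgebra, Ideal.Quotient.algebraMap_eq]
  haveI hRT : IsScalarTower R (S ⧸ I ^ (m + 1)) (S ⧸ I ^ m) :=
    IsScalarTower.of_algebraMap_eq fun r => by
      rw [IsScalarTower.algebraMap_apply R S (S ⧸ I ^ m),
        IsScalarTower.algebraMap_apply S (S ⧸ I ^ (m + 1)) (S ⧸ I ^ m),
        ← IsScalarTower.algebraMap_apply R S (S ⧸ I ^ (m + 1))]
  haveI hcomm : SMulCommClass R (S ⧸ I ^ (m + 1)) (S ⧸ I ^ m) :=
    ⟨fun r a b => by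
      rw [Algebra.smul_def, Algebra.smul_def, Algebra.smul_def, Algebra.smul_def]
      ring⟩
  apply Derivation.liftKaehlerDifferential_unique
  ext x
  simp only [Derivation.coe_comp, LinearMap.coe_comp, LinearMap.coe_restrictScalars,
    Function.comp_apply, Derivation.coeFn_coe, KaehlerDifferential.map_D]
  show (KaehlerDifferential.map R R (S ⧸ I ^ (m + 1)) (S ⧸ I ^ m))
      (KaehlerDifferential.D R (S ⧸ I ^ (m + 1)) ((algebraMap S (S ⧸ I ^ (m + 1))) x))
    = KaehlerDifferential.D R (S ⧸ I ^ m) ((algebraMap S (S ⧸ I ^ m)) x)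
  rw [KaehlerDifferential.map_D, ← IsScalarTower.algebraMap_apply]

/-- The natural surjection `Ω/I^{m+1}Ω → Ω/I^m Ω`. -/
noncomputable def kaehlerTransQ (m : ℕ) :
    (Ω[S⁄R] ⧸ (I ^ (m + 1) • ⊤ : Submodule S (Ω[S⁄R]))) →ₗ[S]
      (Ω[S⁄R] ⧸ (I ^ m • ⊤ : Submodule S (Ω[S⁄R]))) :=
  Submodule.mapQ _ _ LinearMap.id
    (by rw [Submodule.comap_id]
        exact Submodule.smul_mono_left (Ideal.pow_le_pow_right (Nat.le_succ m)))

theorem kaehlerToQuot_compat (m : ℕ) :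
    (kaehlerQuotTrans (R := R) I m).comp (kaehlerToQuot (R := R) I (m + 1))
      = (kaehlerToQuot (R := R) I m).comp (kaehlerTransQ (R := R) I m) := by
  refine Submodule.linearMap_qext _ (LinearMap.ext fun ω => ?_)
  have h := LinearMap.congr_fun (kaehlerQuotTrans_comp_map I m) ω
  simp only [LinearMap.coe_comp, Function.comp_apply] at h
  simp only [LinearMap.coe_comp, Function.comp_apply, Submodule.mkQ_apply,
    kaehlerToQuot, kaehlerTransQ, Submodule.liftQ_apply, Submodule.mapQ_apply,
    LinearMap.id_coe, id_eq]
  exact h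

/-- The inverse limit of a tower of `S`-modules, realized as the submodule of the
product consisting of the sequences compatible with the transition maps. -/
def towerLimit {S : Type*} [CommRing S] (A : ℕ → Type*) [∀ m, AddCommGroup (A m)]
    [∀ m, Module S (A m)] (a : ∀ m, A (m + 1) →ₗ[S] A m) : Submodule S (∀ m, A m) where
  carrier := {x | ∀ m, a m (x (m + 1)) = x m}
  add_mem' := fun {x y} hx hy m => by simp [hx m, hy m]
  zero_mem' := fun m => by simp
  smul_mem' := fun c {x} hx m => by simp [hx m]

/-- The map between inverse limits induced levelwise by maps commuting with the
transition maps. -/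
noncomputable def towerLimitMap {S : Type*} [CommRing S] {A B : ℕ → Type*}
    [∀ m, AddCommGroup (A m)] [∀ m, Module S (A m)]
    [∀ m, AddCommGroup (B m)] [∀ m, Module S (B m)]
    (a : ∀ m, A (m + 1) →ₗ[S] A m) (b : ∀ m, B (m + 1) →ₗ[S] B m)
    (φ : ∀ m, A m →ₗ[S] B m)
    (hφ : ∀ m, (b m).comp (φ (m + 1)) = (φ m).comp (a m)) :
    towerLimit A a →ₗ[S] towerLimit B b where
  toFun x := ⟨fun m => φ m (x.1 m), fun m => by
    have h := LinearMap.congr_fun (hφ m) (x.1 (m + 1))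
    simp only [LinearMap.coe_comp, Function.comp_apply] at h
    rw [h, x.2 m]⟩
  map_add' x y := Subtype.ext (funext fun m => by simp)
  map_smul' c x := Subtype.ext (funext fun m => by simp)

section TowerLimit

variable {k : Type*} [CommRing k] {A B : ℕ → Type*}
    [∀ m, AddCommGroup (A m)] [∀ m, Module k (A m)]
    [∀ m, AddCommGroup (B m)] [∀ m, Module k (B m)]
    {a : ∀ m, A (m + 1) →ₗ[k] A m} {b : ∀ m, B (m + 1) →ₗ[k] B m}
    {φ : ∀ m, A m →ₗ[k] B m} (hφ : ∀ m, (b m).comp (φ (m + 1)) = (φ m).comp (a m))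

theorem towerLimitMap_injective (hker : ∀ m, LinearMap.ker (φ (m + 1)) ≤ LinearMap.ker (a m)) :
    Function.Injective (towerLimitMap a b φ hφ) := by
  rw [injective_iff_map_eq_zero]
  intro x hx
  ext m
  have hx_succ : φ (m + 1) (x.1 (m + 1)) = 0 := congrFun (congrArg Subtype.val hx) (m + 1)
  rw [← x.2 m]
  exact hker m hx_succ

theorem towerLimitMap_surjective (hsurj : ∀ m, Function.Surjective (φ m))
    (hker : ∀ m, LinearMap.ker (φ (m + 1)) ≤ LinearMap.ker (a m)) :
    Function.Surjective (towerLimitMap a b φ hφ) := by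
  rintro ⟨y, hy⟩
  have hφ_apply (m : ℕ) (x : A (m + 1)) : b m (φ (m + 1) x) = φ m (a m x) :=
    LinearMap.congr_fun (hφ m) x
  have a_eq {m : ℕ} {u v : A (m + 1)} (h : φ (m + 1) u = φ (m + 1) v) : a m u = a m v :=
    LinearMap.sub_mem_ker_iff.mp (hker m (LinearMap.sub_mem_ker_iff.mpr h))
  -- by `hker`, `a m (z m)` does not depend on the chosen lift `z m` of `y (m + 1)`
  choose z hz using fun m => hsurj (m + 1) (y (m + 1))
  refine ⟨⟨fun m => a m (z m), fun m => a_eq ?_⟩, ?_⟩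
  · rw [← hφ_apply, hz, hz, hy]
  · ext m
    show φ m (a m (z m)) = y m
    rw [← hφ_apply, hz, hy]

theorem towerLimitMap_bijective (hsurj : ∀ m, Function.Surjective (φ m))
    (hker : ∀ m, LinearMap.ker (φ (m + 1)) ≤ LinearMap.ker (a m)) :
    Function.Bijective (towerLimitMap a b φ hφ) :=
  ⟨towerLimitMap_injective hφ hker, towerLimitMap_surjective hφ hsurj hker⟩

end TowerLimit

theorem Derivation.map_mem_pow_smul_top {M : Type*} [AddCommGroup M] [Module S M]
    [Module R M] [IsScalarTower R S M] (d : Derivation R S M) (m : ℕ) {x : S}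
    (hx : x ∈ I ^ (m + 1)) : d x ∈ (I ^ m • ⊤ : Submodule S M) := by
  induction m generalizing x with
  | zero => simp
  | succ m ih =>
    rw [pow_succ] at hx
    refine Submodule.mul_induction_on hx (fun u hu v hv => ?_) (fun u v hu hv => ?_)
    · have hvdu : v • d u ∈ I • (I ^ m • ⊤ : Submodule S M) := Submodule.smul_mem_smul hv (ih hu)
      rw [← Submodule.smul_assoc, smul_eq_mul, ← pow_succ'] at hvdu
      rw [Derivation.leibniz]
      exact add_mem (Submodule.smul_mem_smul hu trivial) hvdu
    · rw [map_add]
      exact add_mem hu hv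

namespace KaehlerDifferential

open TensorProduct

theorem ker_map_quotient_le (J : Ideal S) :
    LinearMap.ker (map R R S (S ⧸ J)) ≤
      (J • ⊤ : Submodule S (Ω[S⁄R])) ⊔ Submodule.span S (D R S '' (J : Set S)) := by
  intro ω hω
  have hω' : mapBaseChange R S (S ⧸ J) (1 ⊗ₜ ω) = 0 := by
    rw [mapBaseChange_tmul, LinearMap.mem_ker.mp hω, smul_zero]
  -- conormal sequence `J/J² → (S/J) ⊗ Ω[S⁄R] → Ω[(S/J)⁄R]`
  obtain ⟨c, hc⟩ := (exact_kerCotangentToTensor_mapBaseChange R S (S ⧸ J)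
    Ideal.Quotient.mk_surjective _).mp hω'
  obtain ⟨x, rfl⟩ := Ideal.toCotangent_surjective _ c
  rw [kerCotangentToTensor_toCotangent] at hc
  have hx : (x : S) ∈ J := Ideal.Quotient.eq_zero_iff_mem.mp x.2
  have hrest : ω - D R S x ∈ (J • ⊤ : Submodule S (Ω[S⁄R])) := by
    rw [← Submodule.Quotient.mk_eq_zero, ← quotTensorEquivQuotSMul_mk_one_tmul, tmul_sub, hc,
      sub_self, map_zero]
  simpa using Submodule.add_mem_sup hrest
    (Submodule.subset_span (s := D R S '' (J : Set S)) ⟨x, hx, rfl⟩)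

theorem ker_map_quotient_pow_succ_le (m : ℕ) :
    LinearMap.ker (map R R S (S ⧸ I ^ (m + 1))) ≤ (I ^ m • ⊤ : Submodule S (Ω[S⁄R])) := by
  refine (ker_map_quotient_le (I ^ (m + 1))).trans (sup_le ?_ ?_)
  · exact Submodule.smul_mono_left (Ideal.pow_le_pow_right m.le_succ)
  · rw [Submodule.span_le]
    rintro _ ⟨x, hx, rfl⟩
    exact (D R S).map_mem_pow_smul_top I m hx

end KaehlerDifferential

theorem kaehlerToQuot_surjective (m : ℕ) : Function.Surjective (kaehlerToQuot (R := R) I m) :=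
  Function.Surjective.of_comp (g := Submodule.mkQ _) <|
    KaehlerDifferential.map_surjective_of_surjective R R S (S ⧸ I ^ m) Ideal.Quotient.mk_surjective

theorem ker_kaehlerToQuot_succ_le (m : ℕ) :
    LinearMap.ker (kaehlerToQuot (R := R) I (m + 1)) ≤ LinearMap.ker (kaehlerTransQ I m) := by
  have hmkQ : (kaehlerTransQ (R := R) I m).comp (Submodule.mkQ _) = Submodule.mkQ _ := by
    rw [kaehlerTransQ, Submodule.mapQ_mkQ, LinearMap.comp_id]
  rw [kaehlerToQuot, Submodule.ker_liftQ, Submodule.map_le_iff_le_comap, ← LinearMap.ker_comp,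
    hmkQ, Submodule.ker_mkQ]
  exact KaehlerDifferential.ker_map_quotient_pow_succ_le I m

/-- **`lim Ω[S⁄R]/I^m Ω[S⁄R] = lim Ω[(S/I^m)⁄R]`.**  The natural map between the
inverse limits, induced levelwise by the natural maps
`Ω[S⁄R]/I^m•Ω[S⁄R] → Ω[(S/I^m)⁄R]`, is an isomorphism of `S`-modules. -/
theorem bijective_towerLimitMap_kaehler :
    Function.Bijective
      (towerLimitMap (S := S)
        (A := fun m => Ω[S⁄R] ⧸ (I ^ m • ⊤ : Submodule S (Ω[S⁄R])))
        (B := fun m => Ω[(S ⧸ I ^ m)⁄R])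
        (fun m => kaehlerTransQ (R := R) I m) (fun m => kaehlerQuotTrans I m)
        (fun m => kaehlerToQuot I m) (fun m => kaehlerToQuot_compat I m)) :=
  towerLimitMap_bijective _ (kaehlerToQuot_surjective I) (ker_kaehlerToQuot_succ_le I)
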